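/- arXiv:2509.20763 — 2 statements merged into one kernel-verified Lean document; each statement's English description precedes it below -/
import Mathlib

section
/- For every finite simple graph G, the odd independence number of G is at least the independence number of the square of G: αod(G) ≥ α(G²). -/
open Finset

section OddIndepDefs

variable {V : Type*} [Fintype V] [DecidableEq V]

/-- `S` is an odd independent set in `G`: `S` is independent and every vertex outside `S`
has either no neighbor in `S` or an odd number of neighbors in `S`. -/
def IsOddIndepSet (G : SimpleGraph V) [DecidableRel G.Adj] (S : Finset V) : Prop :=
  (∀ u ∈ S, ∀ v ∈ S, ¬ G.Adj u v) ∧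
  ∀ v ∉ S, (S.filter fun u => G.Adj v u) = ∅ ∨ Odd (S.filter fun u => G.Adj v u).card

/-- The odd independence number: the largest size of an odd independent set. -/
noncomputable def oddIndepNum (G : SimpleGraph V) [DecidableRel G.Adj] : ℕ :=
  sSup {k | ∃ S : Finset V, IsOddIndepSet G S ∧ S.card = k}

/-- The independence number: the largest size of an independent set. -/
noncomputable def indepNum (G : SimpleGraph V) : ℕ :=
  sSup {k | ∃ S : Finset V, (∀ u ∈ S, ∀ v ∈ S, ¬ G.Adj u v) ∧ S.card = k}

/-- A strong odd coloring with `n` colors: a proper coloring such that for every vertex `v`,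
every color appearing in the open neighborhood of `v` appears there an odd number of times. -/
def IsStrongOddColoring (G : SimpleGraph V) [DecidableRel G.Adj] {n : ℕ} (c : V → Fin n) : Prop :=
  (∀ u v, G.Adj u v → c u ≠ c v) ∧
  ∀ v : V, ∀ k : Fin n,
    (univ.filter fun u => G.Adj v u ∧ c u = k) = ∅ ∨
    Odd (univ.filter fun u => G.Adj v u ∧ c u = k).card

/-- The strong odd chromatic number: minimum number of colors of a strong odd coloring. -/
noncomputable def strongOddChromNum (G : SimpleGraph V) [DecidableRel G.Adj] : ℕ :=
  sInf {n | ∃ c : V → Fin n, IsStrongOddColoring G c}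

/-- The chromatic number, as a natural number. -/
noncomputable def chromNum (G : SimpleGraph V) : ℕ :=
  sInf {n | ∃ c : V → Fin n, ∀ u v, G.Adj u v → c u ≠ c v}

/-- The square of a graph: two distinct vertices are adjacent iff they are at distance at most 2,
i.e. adjacent or having a common neighbor. -/
def graphSquare (G : SimpleGraph V) : SimpleGraph V where
  Adj u v := u ≠ v ∧ (G.Adj u v ∨ ∃ w, G.Adj u w ∧ G.Adj w v)
  symm := by
    constructor
    intro u v h
    refine ⟨h.1.symm, ?_⟩
    rcases h.2 with h' | ⟨w, h1, h2⟩
    · exact Or.inl h'.symm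
    · exact Or.inr ⟨w, h2.symm, h1.symm⟩
  loopless := ⟨fun v h => h.1 rfl⟩

instance (G : SimpleGraph V) [DecidableRel G.Adj] : DecidableRel (graphSquare G).Adj :=
  fun u v => inferInstanceAs (Decidable (u ≠ v ∧ (G.Adj u v ∨ ∃ w, G.Adj u w ∧ G.Adj w v)))

end OddIndepDefs

section OddIndepOfSquare

variable {V : Type*} {G : SimpleGraph V} {S : Finset V}

lemma not_adj_of_indep_graphSquare (hS : ∀ u ∈ S, ∀ v ∈ S, ¬ (graphSquare G).Adj u v) :
    ∀ u ∈ S, ∀ v ∈ S, ¬ G.Adj u v :=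
  fun u hu v hv huv => hS u hu v hv ⟨huv.ne, Or.inl huv⟩

/-- Two members of `S` with a common neighbour `v` would be adjacent in `G²`. -/
lemma card_filter_adj_le_one_of_indep_graphSquare [DecidableRel G.Adj]
    (hS : ∀ u ∈ S, ∀ v ∈ S, ¬ (graphSquare G).Adj u v) (v : V) :
    (S.filter fun u => G.Adj v u).card ≤ 1 := by
  refine Finset.card_le_one.2 fun u hu w hw => ?_
  rw [Finset.mem_filter] at hu hw
  by_contra huw
  exact hS u hu.1 w hw.1 ⟨huw, Or.inr ⟨v, hu.2.symm, hw.2⟩⟩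

lemma isOddIndepSet_of_indep_graphSquare [Fintype V] [DecidableEq V] [DecidableRel G.Adj]
    (hS : ∀ u ∈ S, ∀ v ∈ S, ¬ (graphSquare G).Adj u v) : IsOddIndepSet G S := by
  refine ⟨not_adj_of_indep_graphSquare hS, fun v _ => ?_⟩
  rcases Nat.le_one_iff_eq_zero_or_eq_one.1 (card_filter_adj_le_one_of_indep_graphSquare hS v)
    with h | h
  · exact Or.inl (Finset.card_eq_zero.1 h)
  · exact Or.inr (h ▸ odd_one)

lemma card_le_oddIndepNum [Fintype V] [DecidableEq V] [DecidableRel G.Adj]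
    (hS : IsOddIndepSet G S) : S.card ≤ oddIndepNum G :=
  le_csSup ⟨Fintype.card V, by rintro k ⟨T, -, rfl⟩; exact T.card_le_univ⟩ ⟨S, hS, rfl⟩

end OddIndepOfSquare

/-- For every finite simple graph `G`, `αod(G) ≥ α(G²)`. -/
theorem indepNum_graphSquare_le_oddIndepNum
    {V : Type*} [Fintype V] [DecidableEq V] (G : SimpleGraph V) [DecidableRel G.Adj] :
    indepNum (graphSquare G) ≤ oddIndepNum G := by
  apply csSup_le'
  rintro k ⟨S, hS, rfl⟩
  exact card_le_oddIndepNum (isOddIndepSet_of_indep_graphSquare hS)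
end

section
/- If G is a finite simple graph on n vertices with maximum degree Δ(G) ≥ 3, then (Δ(G)² − 1)·αod(G) ≥ n. -/
open Finset

/-!
Let `B(x)` be the ball of radius two around `x`, so `|B(x)| ≤ Δ² + 1`. Grow an odd independent
set `S` with `|⋃_{s ∈ S} B(s)| ≤ (Δ² - 1)|S|` by adding sets `T` at distance at least three from
`S` (so `S ∪ T` stays odd independent) that cover at most `(Δ² - 1)|T|` new vertices; once
everything is covered, `n ≤ (Δ² - 1)|S|`.

A single uncovered vertex `x` will do unless `B(x)` is almost full and misses the cover. Counting
paths of length two from `x` then shows that `N(x)` is independent and that at most one vertex at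
distance two sees two neighbours of `x`; three suitable neighbours of `x` form an odd independent
set whose balls overlap in `N[x]`, which pays off unless `Δ = 3`. In that last case `|B(x)| = 9`,
and either a pair `{x, t}` with `t` at distance three has overlapping balls, or `B(x)` is a union
of components of a cubic graph on nine vertices, contradicting the handshake lemma.
-/

lemma Finset.eq_empty_or_odd_card_of_card_le_one {α : Type*} {s : Finset α} (h : #s ≤ 1) :
    s = ∅ ∨ Odd #s := by
  interval_cases hs : #s
  · exact .inl (card_eq_zero.1 hs)
  · exact .inr odd_one

namespace SimpleGraph

variable {V : Type*} [Fintype V] {G : SimpleGraph V} [DecidableRel G.Adj]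

lemma _root_.IsOddIndepSet.card_le_oddIndepNum {S : Finset V} (hS : IsOddIndepSet G S) :
    #S ≤ oddIndepNum G :=
  le_csSup ⟨Fintype.card V, fun _ ⟨S', _, hS'⟩ => hS' ▸ card_le_univ S'⟩ ⟨S, hS, rfl⟩

variable [DecidableEq V] (G)

def ball2 (x : V) : Finset V :=
  {v | v = x ∨ G.Adj x v ∨ ∃ w, G.Adj x w ∧ G.Adj w v}

def sphere2 (x : V) : Finset V :=
  G.ball2 x \ insert x (G.neighborFinset x)

def ball2Union (S : Finset V) : Finset V :=
  S.biUnion G.ball2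

def IsCheapExtension (S T : Finset V) : Prop :=
  T.Nonempty ∧ Disjoint T (G.ball2Union S) ∧ IsOddIndepSet G T ∧
    #(G.ball2Union T \ G.ball2Union S) ≤ (G.maxDegree ^ 2 - 1) * #T

variable {G} {x y z t u v w : V} {S T A : Finset V}

lemma mem_ball2 : v ∈ G.ball2 x ↔ v = x ∨ G.Adj x v ∨ ∃ w, G.Adj x w ∧ G.Adj w v := by
  simp [ball2]

lemma self_mem_ball2 (x : V) : x ∈ G.ball2 x := mem_ball2.2 (.inl rfl)

lemma Adj.mem_ball2 (h : G.Adj x v) : v ∈ G.ball2 x := SimpleGraph.mem_ball2.2 (.inr (.inl h))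

lemma mem_ball2_of_adj_of_adj (h₁ : G.Adj x w) (h₂ : G.Adj w v) : v ∈ G.ball2 x :=
  mem_ball2.2 (.inr (.inr ⟨w, h₁, h₂⟩))

lemma mem_ball2_comm : v ∈ G.ball2 x ↔ x ∈ G.ball2 v := by
  simp only [mem_ball2, G.adj_comm x v, eq_comm (a := v)]
  refine or_congr_right (or_congr_right ⟨?_, ?_⟩) <;>
    exact fun ⟨w, h₁, h₂⟩ => ⟨w, h₂.symm, h₁.symm⟩

lemma insert_neighborFinset_subset_ball2 (x : V) :
    insert x (G.neighborFinset x) ⊆ G.ball2 x := by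
  intro v hv
  rcases mem_insert.1 hv with rfl | hv
  · exact self_mem_ball2 v
  · exact ((mem_neighborFinset G x v).1 hv).mem_ball2

lemma insert_neighborFinset_subset_ball2_of_adj (h : G.Adj x u) :
    insert x (G.neighborFinset x) ⊆ G.ball2 u := by
  intro v hv
  rcases mem_insert.1 hv with rfl | hv
  · exact h.symm.mem_ball2
  · exact mem_ball2_of_adj_of_adj h.symm ((mem_neighborFinset G x v).1 hv)

lemma card_ball2 (x : V) : #(G.ball2 x) = 1 + G.degree x + #(G.sphere2 x) := by
  rw [sphere2, card_sdiff_of_subset (insert_neighborFinset_subset_ball2 x),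
    card_insert_of_notMem (by simp), card_neighborFinset_eq_degree]
  have := card_le_card (insert_neighborFinset_subset_ball2 (G := G) x)
  rw [card_insert_of_notMem (by simp), card_neighborFinset_eq_degree] at this
  omega

lemma mem_sphere2 : y ∈ G.sphere2 x ↔ y ∈ G.ball2 x ∧ y ≠ x ∧ ¬ G.Adj x y := by
  simp [sphere2, not_or]

lemma one_le_card_filter_adj_of_mem_sphere2 (hy : y ∈ G.sphere2 x) :
    1 ≤ #((G.neighborFinset x).filter (G.Adj y)) := by
  obtain ⟨hb, hyx, hxy⟩ := mem_sphere2.1 hy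
  rcases mem_ball2.1 hb with h | h | ⟨w, hxw, hwy⟩
  · exact absurd h hyx
  · exact absurd h hxy
  · exact card_pos.2 ⟨w, mem_filter.2 ⟨(mem_neighborFinset G x w).2 hxw, hwy.symm⟩⟩

lemma mem_ball2Union : v ∈ G.ball2Union S ↔ ∃ s ∈ S, v ∈ G.ball2 s := by
  simp [ball2Union]

lemma subset_ball2Union (S : Finset V) : S ⊆ G.ball2Union S :=
  fun s hs => mem_ball2Union.2 ⟨s, hs, self_mem_ball2 s⟩

lemma ball2Union_union (S T : Finset V) :
    G.ball2Union (S ∪ T) = G.ball2Union S ∪ G.ball2Union T :=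
  union_biUnion

lemma ball2Union_singleton (x : V) : G.ball2Union {x} = G.ball2 x :=
  singleton_biUnion

lemma ball2Union_pair (x t : V) : G.ball2Union {x, t} = G.ball2 x ∪ G.ball2 t := by
  simp [ball2Union]

lemma isOddIndepSet_of_pairwise_notMem_ball2 (hS : ∀ u ∈ S, ∀ v ∈ S, u ≠ v → v ∉ G.ball2 u) :
    IsOddIndepSet G S := by
  refine ⟨fun u hu v hv huv => hS u hu v hv huv.ne huv.mem_ball2, fun v _ => ?_⟩
  refine eq_empty_or_odd_card_of_card_le_one (card_le_one.2 fun a ha b hb => ?_)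
  rw [mem_filter] at ha hb
  by_contra hab
  exact hS a ha.1 b hb.1 hab (mem_ball2_of_adj_of_adj ha.2.symm hb.2)

lemma isOddIndepSet_singleton (x : V) : IsOddIndepSet G {x} :=
  isOddIndepSet_of_pairwise_notMem_ball2 (by simp)

lemma isOddIndepSet_pair (ht : t ∉ G.ball2 x) : IsOddIndepSet G {x, t} := by
  refine isOddIndepSet_of_pairwise_notMem_ball2 ?_
  simp only [mem_insert, mem_singleton]
  rintro u (rfl | rfl) v (rfl | rfl) huv <;> first | exact absurd rfl huv | skip
  · exact ht
  · rwa [mem_ball2_comm]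

lemma isOddIndepSet_of_subset_neighborFinset (hA : A ⊆ G.neighborFinset x) (hodd : Odd #A)
    (hN : ∀ u ∈ G.neighborFinset x, ∀ w ∈ G.neighborFinset x, ¬ G.Adj u w)
    (hsphere : ∀ y ∈ G.sphere2 x, #(A.filter (G.Adj y)) ≤ 1) :
    IsOddIndepSet G A := by
  refine ⟨fun u hu w hw => hN u (hA hu) w (hA hw), fun v _ => ?_⟩
  by_cases hvx : v = x
  · subst hvx
    rw [filter_true_of_mem fun a ha => (mem_neighborFinset G v a).1 (hA ha)]
    exact .inr hodd
  by_cases hxv : G.Adj x v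
  · exact .inl (filter_eq_empty_iff.2 fun a ha => hN v ((mem_neighborFinset G x v).2 hxv) a (hA ha))
  by_cases hvb : v ∈ G.ball2 x
  · exact eq_empty_or_odd_card_of_card_le_one (hsphere v (mem_sphere2.2 ⟨hvb, hvx, hxv⟩))
  · refine .inl (filter_eq_empty_iff.2 fun a ha hva => hvb ?_)
    exact mem_ball2_of_adj_of_adj ((mem_neighborFinset G x a).1 (hA ha)) hva.symm

lemma _root_.IsOddIndepSet.union (hS : IsOddIndepSet G S) (hT : IsOddIndepSet G T)
    (hfar : Disjoint T (G.ball2Union S)) : IsOddIndepSet G (S ∪ T) := by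
  have hfar' : ∀ s ∈ S, ∀ t ∈ T, t ∉ G.ball2 s := fun s hs t ht hts =>
    Finset.disjoint_left.1 hfar ht (mem_ball2Union.2 ⟨s, hs, hts⟩)
  refine ⟨?_, fun v hv => ?_⟩
  · simp only [mem_union]
    rintro u (hu | hu) w (hw | hw) huw
    · exact hS.1 u hu w hw huw
    · exact hfar' u hu w hw huw.mem_ball2
    · exact hfar' w hw u hu huw.symm.mem_ball2
    · exact hT.1 u hu w hw huw
  rw [notMem_union] at hv
  rw [filter_union]
  by_cases hTv : T.filter (G.Adj v) = ∅
  · rw [hTv, union_empty]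
    exact hS.2 v hv.1
  · obtain ⟨t, ht⟩ := nonempty_iff_ne_empty.2 hTv
    rw [mem_filter] at ht
    have hSv : S.filter (G.Adj v) = ∅ := filter_eq_empty_iff.2 fun s hs hvs =>
      hfar' s hs t ht.1 (mem_ball2_of_adj_of_adj hvs.symm ht.2)
    rw [hSv, empty_union]
    exact hT.2 v hv.2

lemma one_add_card_filter_adj_add_le_maxDegree (hxu : G.Adj x u) :
    1 + #((G.neighborFinset x).filter (G.Adj u)) + #((G.sphere2 x).filter (G.Adj u))
      ≤ G.maxDegree := by
  have hdisj : Disjoint ((G.neighborFinset x).filter (G.Adj u)) ((G.sphere2 x).filter (G.Adj u)) :=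
    disjoint_filter_filter (disjoint_of_subset_left (subset_insert _ _) disjoint_sdiff)
  have hx : x ∉ (G.neighborFinset x).filter (G.Adj u) ∪ (G.sphere2 x).filter (G.Adj u) := by
    simp [sphere2]
  have hsub : insert x ((G.neighborFinset x).filter (G.Adj u) ∪ (G.sphere2 x).filter (G.Adj u))
      ⊆ G.neighborFinset u := by
    intro v hv
    rw [mem_neighborFinset]
    rcases mem_insert.1 hv with rfl | hv
    · exact hxu.symm
    · rcases mem_union.1 hv with hv | hv <;> exact (mem_filter.1 hv).2
  have := (card_le_card hsub).trans_eq (card_neighborFinset_eq_degree G u)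
  rw [card_insert_of_notMem hx, card_union_of_disjoint hdisj] at this
  have := G.degree_le_maxDegree u
  omega

lemma sum_card_filter_adj_sphere2_eq (x : V) :
    ∑ u ∈ G.neighborFinset x, #((G.sphere2 x).filter (G.Adj u))
      = ∑ y ∈ G.sphere2 x, #((G.neighborFinset x).filter (G.Adj y)) := by
  refine (sum_card_bipartiteAbove_eq_sum_card_bipartiteBelow G.Adj).trans ?_
  exact sum_congr rfl fun y _ => congrArg card (filter_congr fun u _ => G.adj_comm u y)

/-- Every edge inside `N(x)` (counted twice) and every surplus path `x - u - y` to a vertex `y`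
at distance two costs one vertex of the ball. -/
theorem card_ball2_add_excess_le (x : V) :
    #(G.ball2 x) + ∑ u ∈ G.neighborFinset x, #((G.neighborFinset x).filter (G.Adj u))
      + ∑ y ∈ G.sphere2 x, (#((G.neighborFinset x).filter (G.Adj y)) - 1)
      ≤ 1 + G.degree x * G.maxDegree := by
  have hlocal := sum_le_sum fun u hu =>
    one_add_card_filter_adj_add_le_maxDegree ((mem_neighborFinset G x u).1 hu)
  rw [sum_add_distrib, sum_add_distrib, sum_const, sum_const, card_neighborFinset_eq_degree,
    smul_eq_mul, smul_eq_mul, mul_one, sum_card_filter_adj_sphere2_eq] at hlocal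
  have hsurplus : ∑ y ∈ G.sphere2 x, (#((G.neighborFinset x).filter (G.Adj y)) - 1)
      + #(G.sphere2 x) = ∑ y ∈ G.sphere2 x, #((G.neighborFinset x).filter (G.Adj y)) := by
    rw [card_eq_sum_ones, ← sum_add_distrib]
    exact sum_congr rfl fun y hy => Nat.sub_add_cancel (one_le_card_filter_adj_of_mem_sphere2 hy)
  rw [card_ball2]
  omega

lemma card_ball2_le (x : V) : #(G.ball2 x) ≤ G.maxDegree ^ 2 + 1 := by
  have := G.card_ball2_add_excess_le x
  have := Nat.mul_le_mul_right G.maxDegree (G.degree_le_maxDegree x)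
  rw [sq]
  omega

lemma card_ball2_le_sq_of_mem_sphere2 (hy : y ∈ G.sphere2 x)
    (h : 2 ≤ #((G.neighborFinset x).filter (G.Adj y))) : #(G.ball2 x) ≤ G.maxDegree ^ 2 := by
  have := G.card_ball2_add_excess_le x
  have := single_le_sum (f := fun y => #((G.neighborFinset x).filter (G.Adj y)) - 1)
    (fun _ _ => Nat.zero_le _) hy
  have := Nat.mul_le_mul_right G.maxDegree (G.degree_le_maxDegree x)
  rw [sq]
  omega

lemma degree_eq_maxDegree_of_sq_le_card_ball2 (hΔ : 2 ≤ G.maxDegree)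
    (hx : G.maxDegree ^ 2 ≤ #(G.ball2 x)) : G.degree x = G.maxDegree := by
  have := G.card_ball2_add_excess_le x
  refine (G.degree_le_maxDegree x).antisymm (by_contra fun hlt => ?_)
  have hmul := Nat.mul_le_mul_right G.maxDegree (Nat.le_pred_of_lt (not_le.1 hlt))
  rw [Nat.pred_mul] at hmul
  rw [sq] at hx
  have := Nat.le_mul_of_pos_left G.maxDegree (show 0 < G.maxDegree by omega)
  omega

lemma excess_add_card_ball2_le_of_sq_le_card_ball2 (hΔ : 2 ≤ G.maxDegree)
    (hx : G.maxDegree ^ 2 ≤ #(G.ball2 x)) :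
    ∑ u ∈ G.neighborFinset x, #((G.neighborFinset x).filter (G.Adj u))
      + ∑ y ∈ G.sphere2 x, (#((G.neighborFinset x).filter (G.Adj y)) - 1) + #(G.ball2 x)
      ≤ G.maxDegree ^ 2 + 1 := by
  have := G.card_ball2_add_excess_le x
  rw [degree_eq_maxDegree_of_sq_le_card_ball2 hΔ hx, ← sq] at this
  omega

lemma neighborFinset_pairwise_not_adj_of_sq_le_card_ball2 (hΔ : 2 ≤ G.maxDegree)
    (hx : G.maxDegree ^ 2 ≤ #(G.ball2 x)) :
    ∀ u ∈ G.neighborFinset x, ∀ w ∈ G.neighborFinset x, ¬ G.Adj u w := by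
  intro u hu w hw huw
  have := add_le_sum (f := fun u => #((G.neighborFinset x).filter (G.Adj u)))
    (fun _ _ => Nat.zero_le _) hu hw huw.ne
  have : 1 ≤ #((G.neighborFinset x).filter (G.Adj u)) := card_pos.2 ⟨w, mem_filter.2 ⟨hw, huw⟩⟩
  have : 1 ≤ #((G.neighborFinset x).filter (G.Adj w)) :=
    card_pos.2 ⟨u, mem_filter.2 ⟨hu, huw.symm⟩⟩
  have := excess_add_card_ball2_le_of_sq_le_card_ball2 hΔ hx
  omega

/-- At most one vertex at distance two sees two neighbours of `x`, and it sees at most two;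
deleting one of those leaves `Δ - 1` neighbours of `x`, each seen at most once from distance two. -/
theorem exists_isOddIndepSet_subset_neighborFinset (hΔ : 3 ≤ G.maxDegree)
    (hx : G.maxDegree ^ 2 ≤ #(G.ball2 x))
    (h : 4 ≤ G.maxDegree ∨ ∀ y ∈ G.sphere2 x, #((G.neighborFinset x).filter (G.Adj y)) ≤ 1) :
    ∃ A ⊆ G.neighborFinset x, #A = 3 ∧ IsOddIndepSet G A := by
  have hdeg := degree_eq_maxDegree_of_sq_le_card_ball2 (by omega) hx
  have hexcess := excess_add_card_ball2_le_of_sq_le_card_ball2 (by omega) hx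
  suffices ∃ B ⊆ G.neighborFinset x, 3 ≤ #B ∧ ∀ y ∈ G.sphere2 x, #(B.filter (G.Adj y)) ≤ 1 by
    obtain ⟨B, hB, hB3, hBy⟩ := this
    obtain ⟨A, hAB, hA⟩ := exists_subset_card_eq hB3
    refine ⟨A, hAB.trans hB, hA, isOddIndepSet_of_subset_neighborFinset (hAB.trans hB)
      (by rw [hA]; decide) (neighborFinset_pairwise_not_adj_of_sq_le_card_ball2 (by omega) hx)
      fun y hy => (card_le_card (filter_subset_filter _ hAB)).trans (hBy y hy)⟩
  by_cases hheavy : ∃ y₀ ∈ G.sphere2 x, 2 ≤ #((G.neighborFinset x).filter (G.Adj y₀))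
  · obtain ⟨y₀, hy₀, h₀⟩ := hheavy
    obtain ⟨u₀, hu₀⟩ : ((G.neighborFinset x).filter (G.Adj y₀)).Nonempty := card_pos.1 (by omega)
    have hΔ4 : 4 ≤ G.maxDegree := h.resolve_right fun h' => by have := h' y₀ hy₀; omega
    refine ⟨(G.neighborFinset x).erase u₀, erase_subset _ _, ?_, fun y hy => ?_⟩
    · rw [card_erase_of_mem (mem_filter.1 hu₀).1, card_neighborFinset_eq_degree, hdeg]
      omega
    rw [filter_erase]
    by_cases hyy₀ : y = y₀
    · subst hyy₀
      have := single_le_sum (f := fun y => #((G.neighborFinset x).filter (G.Adj y)) - 1)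
        (fun _ _ => Nat.zero_le _) hy
      rw [card_erase_of_mem hu₀]
      omega
    · have := add_le_sum (f := fun y => #((G.neighborFinset x).filter (G.Adj y)) - 1)
        (fun _ _ => Nat.zero_le _) hy hy₀ hyy₀
      have := card_erase_le (a := u₀) (s := (G.neighborFinset x).filter (G.Adj y))
      omega
  · push Not at hheavy
    refine ⟨G.neighborFinset x, subset_rfl, ?_, fun y hy => Nat.le_of_lt_succ (hheavy y hy)⟩
    rw [card_neighborFinset_eq_degree, hdeg]
    omega

lemma card_ball2Union_le_of_subset_neighborFinset (hA : A ⊆ G.neighborFinset x) :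
    #(G.ball2Union A) ≤ G.degree x + 1 + #A * (G.maxDegree ^ 2 - G.degree x) := by
  let K := insert x (G.neighborFinset x)
  have hK : #K = G.degree x + 1 := by
    rw [card_insert_of_notMem (by simp), card_neighborFinset_eq_degree]
  have hsub : G.ball2Union A ⊆ K ∪ A.biUnion fun a => G.ball2 a \ K := by
    intro v hv
    obtain ⟨a, ha, hva⟩ := mem_ball2Union.1 hv
    by_cases hvK : v ∈ K
    · exact mem_union_left _ hvK
    · exact mem_union_right _ (mem_biUnion.2 ⟨a, ha, mem_sdiff.2 ⟨hva, hvK⟩⟩)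
  calc #(G.ball2Union A) ≤ #K + ∑ a ∈ A, #(G.ball2 a \ K) :=
        (card_le_card hsub).trans
          ((card_union_le _ _).trans (Nat.add_le_add_left card_biUnion_le _))
    _ ≤ #K + ∑ _a ∈ A, (G.maxDegree ^ 2 - G.degree x) := by
        gcongr with a ha
        have hxa : G.Adj x a := (mem_neighborFinset G x a).1 (hA ha)
        rw [card_sdiff_of_subset (insert_neighborFinset_subset_ball2_of_adj hxa), hK]
        have := G.card_ball2_le a
        omega
    _ = _ := by rw [sum_const, smul_eq_mul, hK]

lemma card_ball2_union_add_two_le (hxu : G.Adj x u) (huy : G.Adj u y) (hyt : G.Adj y t) :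
    #(G.ball2 x ∪ G.ball2 t) + 2 ≤ #(G.ball2 x) + #(G.ball2 t) := by
  have hsub : {u, y} ⊆ G.ball2 x ∩ G.ball2 t := by
    simp only [insert_subset_iff, singleton_subset_iff, mem_inter]
    exact ⟨⟨hxu.mem_ball2, mem_ball2_of_adj_of_adj hyt.symm huy.symm⟩,
      mem_ball2_of_adj_of_adj hxu huy, hyt.symm.mem_ball2⟩
  have := card_le_card hsub
  rw [card_pair huy.ne] at this
  have := card_union_add_card_inter (G.ball2 x) (G.ball2 t)
  omega

lemma even_sum_degree_of_forall_adj_mem {K : Finset V} (hK : ∀ v ∈ K, ∀ w, G.Adj v w → w ∈ K) :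
    Even (∑ v ∈ K, G.degree v) := by
  rw [← sum_coe_sort K]
  refine ⟨_, ((Fintype.sum_congr _ _ fun v => ?_).trans
    (G.induce (K : Set V)).sum_degrees_eq_twice_card_edges).trans (two_mul _)⟩
  convert (degree_induce_of_neighborSet_subset (G := G) fun w hw => hK v v.2 w hw).symm

lemma isCheapExtension_singleton (hz : z ∉ G.ball2Union S)
    (h : #(G.ball2 z \ G.ball2Union S) ≤ G.maxDegree ^ 2 - 1) : G.IsCheapExtension S {z} :=
  ⟨singleton_nonempty z, disjoint_singleton_left.2 hz, isOddIndepSet_singleton z,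
    by rwa [ball2Union_singleton, card_singleton, mul_one]⟩

lemma isCheapExtension_of_subset_neighborFinset (hΔ : 2 ≤ G.maxDegree)
    (hdeg : G.degree x = G.maxDegree) (hx : Disjoint (G.ball2 x) (G.ball2Union S))
    (hA : A ⊆ G.neighborFinset x) (hA3 : #A = 3) (hAodd : IsOddIndepSet G A) :
    G.IsCheapExtension S A := by
  refine ⟨card_pos.1 (by omega), disjoint_of_subset_left (hA.trans ((subset_insert _ _).trans
    (insert_neighborFinset_subset_ball2 x))) hx, hAodd, ?_⟩
  have hcard := card_ball2Union_le_of_subset_neighborFinset hA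
  rw [hA3, hdeg] at hcard
  have : 2 * G.maxDegree ≤ G.maxDegree ^ 2 := by rw [sq]; exact Nat.mul_le_mul_right _ hΔ
  rw [hA3]
  have := card_le_card (sdiff_subset (s := G.ball2Union A) (t := G.ball2Union S))
  omega

lemma isCheapExtension_pair (hx : x ∉ G.ball2Union S) (ht : t ∉ G.ball2Union S)
    (hxt : t ∉ G.ball2 x) (hxu : G.Adj x u) (huy : G.Adj u y) (hyt : G.Adj y t)
    (hbx : #(G.ball2 x) = G.maxDegree ^ 2) (hbt : #(G.ball2 t) = G.maxDegree ^ 2) :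
    G.IsCheapExtension S {x, t} := by
  refine ⟨insert_nonempty _ _, disjoint_insert_left.2 ⟨hx, disjoint_singleton_left.2 ht⟩,
    isOddIndepSet_pair hxt, ?_⟩
  rw [ball2Union_pair, card_pair (by rintro rfl; exact hxt (self_mem_ball2 x))]
  have := card_ball2_union_add_two_le hxu huy hyt
  have := card_le_card (sdiff_subset (s := G.ball2 x ∪ G.ball2 t) (t := G.ball2Union S))
  omega

/-- If the ball of an uncovered vertex met the cover, a shortest path from it to `S` would have
length `3` or `4`; either way some uncovered vertex on it sees two covered vertices. -/
lemma disjoint_ball2_ball2Union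
    (h : ∀ z ∉ G.ball2Union S, #(G.ball2 z ∩ G.ball2Union S) ≤ 1) (hz : z ∉ G.ball2Union S) :
    Disjoint (G.ball2 z) (G.ball2Union S) := by
  have two : ∀ z' ∉ G.ball2Union S, ∀ a ∈ G.ball2 z', ∀ b ∈ G.ball2 z',
      a ∈ G.ball2Union S → b ∈ G.ball2Union S → a = b := fun z' hz' a ha b hb hac hbc =>
    card_le_one.1 (h z' hz') a (mem_inter.2 ⟨ha, hac⟩) b (mem_inter.2 ⟨hb, hbc⟩)
  have path3 : ∀ {z' p q s}, z' ∉ G.ball2Union S → s ∈ S →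
      G.Adj z' p → G.Adj p q → G.Adj q s → False := fun hz' hs h₁ h₂ h₃ =>
    h₂.ne (two _ hz' _ h₁.mem_ball2 _ (mem_ball2_of_adj_of_adj h₁ h₂)
      (mem_ball2Union.2 ⟨_, hs, mem_ball2_of_adj_of_adj h₃.symm h₂.symm⟩)
      (mem_ball2Union.2 ⟨_, hs, h₃.symm.mem_ball2⟩))
  refine Finset.disjoint_left.2 fun y hyz hyc => ?_
  obtain ⟨s, hs, hys⟩ := mem_ball2Union.1 hyc
  have hzs : z ∉ G.ball2 s := fun h => hz (mem_ball2Union.2 ⟨s, hs, h⟩)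
  rcases mem_ball2.1 hyz with rfl | hzy | ⟨a, hza, hay⟩
  · exact hz hyc
  · rcases mem_ball2.1 hys with rfl | hsy | ⟨b, hsb, hby⟩
    · exact hzs hzy.symm.mem_ball2
    · exact hzs (mem_ball2_of_adj_of_adj hsy hzy.symm)
    · exact path3 hz hs hzy hby.symm hsb.symm
  · rcases mem_ball2.1 hys with rfl | hsy | ⟨b, hsb, hby⟩
    · exact hzs (mem_ball2_of_adj_of_adj hay.symm hza.symm)
    · exact path3 hz hs hza hay hsy.symm
    · by_cases hac : a ∈ G.ball2Union S
      · exact hay.ne (two z hz a hza.mem_ball2 y hyz hac hyc)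
      · exact path3 hac hs hay hby.symm hsb.symm

/-- Either a vertex at distance two from `x` has a neighbour `t` outside the ball of `x`, and
`{x, t}` will do, or that ball is closed under adjacency and `Δ`-regular on `Δ²` vertices, which
the handshake lemma forbids for odd `Δ`. -/
theorem exists_isCheapExtension_of_odd_maxDegree (hodd : Odd G.maxDegree)
    (hΔ : 2 ≤ G.maxDegree)
    (hball : ∀ z ∉ G.ball2Union S,
      Disjoint (G.ball2 z) (G.ball2Union S) ∧ #(G.ball2 z) = G.maxDegree ^ 2)
    (hx : x ∉ G.ball2Union S) : ∃ T, G.IsCheapExtension S T := by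
  have hunc : ∀ v ∈ G.ball2 x, v ∉ G.ball2Union S := fun v hv =>
    Finset.disjoint_left.1 (hball x hx).1 hv
  by_cases hout : ∃ y ∈ G.sphere2 x, ∃ t, G.Adj y t ∧ t ∉ G.ball2 x
  · obtain ⟨y, hy, t, hyt, ht⟩ := hout
    obtain ⟨u, hu⟩ := card_pos.1 (one_le_card_filter_adj_of_mem_sphere2 hy)
    rw [mem_filter, mem_neighborFinset] at hu
    have hyc := hunc y (mem_sphere2.1 hy).1
    have htc : t ∉ G.ball2Union S := Finset.disjoint_left.1 (hball y hyc).1 hyt.mem_ball2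
    exact ⟨{x, t}, isCheapExtension_pair hx htc ht hu.1 hu.2.symm hyt (hball x hx).2
      (hball t htc).2⟩
  push Not at hout
  have hclosed : ∀ v ∈ G.ball2 x, ∀ w, G.Adj v w → w ∈ G.ball2 x := by
    intro v hv w hvw
    by_cases hvx : v = x
    · exact hvx ▸ hvw.mem_ball2
    by_cases hxv : G.Adj x v
    · exact mem_ball2_of_adj_of_adj hxv hvw
    exact hout v (mem_sphere2.2 ⟨hv, hvx, hxv⟩) w hvw
  have hdeg : ∀ v ∈ G.ball2 x, G.degree v = G.maxDegree := fun v hv =>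
    degree_eq_maxDegree_of_sq_le_card_ball2 hΔ (hball v (hunc v hv)).2.ge
  have heven := even_sum_degree_of_forall_adj_mem hclosed
  rw [sum_congr rfl hdeg, sum_const, (hball x hx).2, smul_eq_mul] at heven
  exact absurd heven (Nat.not_even_iff_odd.2 (hodd.pow.mul hodd))

theorem exists_isCheapExtension (hΔ : 3 ≤ G.maxDegree) (hx : x ∉ G.ball2Union S) :
    ∃ T, G.IsCheapExtension S T := by
  by_cases hsmall : ∃ z ∉ G.ball2Union S, #(G.ball2 z \ G.ball2Union S) ≤ G.maxDegree ^ 2 - 1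
  · obtain ⟨z, hz, h⟩ := hsmall
    exact ⟨{z}, isCheapExtension_singleton hz h⟩
  push Not at hsmall
  have hball : ∀ z ∉ G.ball2Union S,
      Disjoint (G.ball2 z) (G.ball2Union S) ∧ G.maxDegree ^ 2 ≤ #(G.ball2 z) := by
    have hinter : ∀ z ∉ G.ball2Union S, #(G.ball2 z ∩ G.ball2Union S) ≤ 1 := fun z hz => by
      have := card_sdiff_add_card_inter (G.ball2 z) (G.ball2Union S)
      have := hsmall z hz
      have := G.card_ball2_le z
      omega
    intro z hz
    have hdisj := disjoint_ball2_ball2Union hinter hz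
    have := hsmall z hz
    rw [sdiff_eq_self_of_disjoint hdisj] at this
    exact ⟨hdisj, by omega⟩
  by_cases htriple : ∃ z ∉ G.ball2Union S, ∃ A ⊆ G.neighborFinset z, #A = 3 ∧ IsOddIndepSet G A
  · obtain ⟨z, hz, A, hA, hA3, hAodd⟩ := htriple
    exact ⟨A, isCheapExtension_of_subset_neighborFinset (by omega)
      (degree_eq_maxDegree_of_sq_le_card_ball2 (by omega) (hball z hz).2) (hball z hz).1
      hA hA3 hAodd⟩
  have hheavy : ∀ z ∉ G.ball2Union S, ¬ (4 ≤ G.maxDegree ∨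
      ∀ y ∈ G.sphere2 z, #((G.neighborFinset z).filter (G.Adj y)) ≤ 1) := fun z hz h =>
    htriple ⟨z, hz, exists_isOddIndepSet_subset_neighborFinset hΔ (hball z hz).2 h⟩
  push Not at hheavy
  have hΔ3 : G.maxDegree = 3 := by have := (hheavy x hx).1; omega
  refine exists_isCheapExtension_of_odd_maxDegree (by rw [hΔ3]; decide) (by omega)
    (fun z hz => ⟨(hball z hz).1, ?_⟩) hx
  obtain ⟨y, hy, hy2⟩ := (hheavy z hz).2
  exact (card_ball2_le_sq_of_mem_sphere2 hy hy2).antisymm (hball z hz).2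

theorem exists_isOddIndepSet_card_le (hΔ : 3 ≤ G.maxDegree) :
    ∃ S, IsOddIndepSet G S ∧ Fintype.card V ≤ (G.maxDegree ^ 2 - 1) * #S := by
  classical
  let cheap := (univ : Finset V).powerset.filter fun S =>
    IsOddIndepSet G S ∧ #(G.ball2Union S) ≤ (G.maxDegree ^ 2 - 1) * #S
  have hempty : ∅ ∈ cheap :=
    mem_filter.2 ⟨empty_mem_powerset _, isOddIndepSet_of_pairwise_notMem_ball2 (by simp),
      by simp [ball2Union]⟩
  obtain ⟨S, hS, hmax⟩ := cheap.exists_max_image (fun S => #(G.ball2Union S)) ⟨∅, hempty⟩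
  obtain ⟨-, hSodd, hScard⟩ := mem_filter.1 hS
  refine ⟨S, hSodd, ?_⟩
  suffices hcov : G.ball2Union S = univ by rwa [← card_univ, ← hcov]
  refine eq_univ_of_forall fun x => by_contra fun hx => ?_
  obtain ⟨T, ⟨t, htT⟩, hdisj, hTodd, hTcard⟩ := exists_isCheapExtension hΔ hx
  have hST : Disjoint S T := (hdisj.mono_right (subset_ball2Union S)).symm
  have hcard_union : #(G.ball2Union (S ∪ T))
      = #(G.ball2Union S) + #(G.ball2Union T \ G.ball2Union S) := by
    rw [ball2Union_union, ← card_union_of_disjoint disjoint_sdiff, union_sdiff_self_eq_union]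
  have hnew : 0 < #(G.ball2Union T \ G.ball2Union S) :=
    card_pos.2 ⟨t, mem_sdiff.2 ⟨subset_ball2Union T htT, Finset.disjoint_left.1 hdisj htT⟩⟩
  have := hmax (S ∪ T) (mem_filter.2 ⟨mem_powerset.2 (subset_univ _),
    IsOddIndepSet.union hSodd hTodd hdisj,
    by rw [hcard_union, card_union_of_disjoint hST, mul_add]; omega⟩)
  omega

end SimpleGraph

/-- If `G` is a finite simple graph on `n` vertices with maximum degree
`Δ(G) ≥ 3`, then `(Δ(G)² − 1)·αod(G) ≥ n`. -/
theorem card_le_maxDegree_sq_sub_one_mul_oddIndepNum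
    {V : Type*} [Fintype V] [DecidableEq V]
    (G : SimpleGraph V) [DecidableRel G.Adj] (hD : 3 ≤ G.maxDegree) :
    Fintype.card V ≤ (G.maxDegree ^ 2 - 1) * oddIndepNum G := by
  obtain ⟨S, hS, hcard⟩ := G.exists_isOddIndepSet_card_le hD
  exact hcard.trans (Nat.mul_le_mul_left _ hS.card_le_oddIndepNum)
end
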